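/- If ∑_{u,v≥1} ‖E_{1,1}(X_{u,v})‖_2 / (uv)^{1/2} < ∞, then |E_{0,0}(S_{n,m})| / (nm)^{1/2} → 0 almost surely as n∧m → ∞; in particular ∑_{u≥1}∑_{v≥1} |E_{0,0}(X_{u,v})| / (uv)^{1/2} < ∞ almost surely. -/

import Mathlib

open MeasureTheory ProbabilityTheory Filter Topology ENNReal NNReal BoundedContinuousFunction

noncomputable section

/-- The canonical space `Ω = ℝ^{ℤ²}`. -/
abbrev Ω2 : Type := (ℤ × ℤ) → ℝ

/-- The shift by `u ∈ ℤ²`; `T^{u₁} S^{u₂}`. -/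
def shift2 (u : ℤ × ℤ) (ω : Ω2) : Ω2 := fun v => ω (v + u)

/-- The σ-algebra `F_{k,ℓ} = σ(ξ_{j,u} : j ≤ k, u ≤ ℓ)` generated by the coordinates with
index coordinatewise `≤ (k, ℓ)`. -/
def Ffil (k l : ℤ) : MeasurableSpace Ω2 :=
  ⨆ (p : ℤ × ℤ) (_ : p.1 ≤ k ∧ p.2 ≤ l),
    MeasurableSpace.comap (fun ω : Ω2 => ω p) inferInstance

/-- The stationary random field `X_{j,k} = f(T^j S^k ξ)`. -/
def Xf (f : Ω2 → ℝ) (u : ℤ × ℤ) : Ω2 → ℝ := fun ω => f (shift2 u ω)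

/-- Partial sums `S_{n,m} = ∑_{u=1}^n ∑_{v=1}^m X_{u,v}`. -/
def Ssum (f : Ω2 → ℝ) (n m : ℕ) : Ω2 → ℝ := fun ω =>
  ∑ u ∈ Finset.Icc 1 n, ∑ v ∈ Finset.Icc 1 m, Xf f ((u : ℤ), (v : ℤ)) ω

/-- The projection operator
`P_{i,j}(g) = E_{i,j}(g) − E_{i−1,j}(g) − E_{i,j−1}(g) + E_{i−1,j−1}(g)`. -/
def Pproj (μ : Measure Ω2) (i j : ℤ) (g : Ω2 → ℝ) : Ω2 → ℝ := fun ω =>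
  (μ[g|Ffil i j]) ω - (μ[g|Ffil (i - 1) j]) ω - (μ[g|Ffil i (j - 1)]) ω
    + (μ[g|Ffil (i - 1) (j - 1)]) ω

/-- The random centering `R_{n,m} = E_{n,0}(S_{n,m}) + E_{0,m}(S_{n,m}) − E_{0,0}(S_{n,m})`. -/
def Rcenter (μ : Measure Ω2) (f : Ω2 → ℝ) (n m : ℕ) : Ω2 → ℝ := fun ω =>
  (μ[Ssum f n m|Ffil n 0]) ω + (μ[Ssum f n m|Ffil 0 m]) ω - (μ[Ssum f n m|Ffil 0 0]) ω

/-- Condition A: `X_{j,k} = f(T^j S^k ξ)` with `f` measurable with respect to `F_{0,0}`,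
`X_{0,0}` square integrable and centered, the field is (strictly) stationary,
the filtration is commuting, and one of the two shifts `T`, `S` is ergodic. -/
structure ConditionA (μ : Measure Ω2) (f : Ω2 → ℝ) : Prop where
  meas : Measurable[Ffil 0 0] f
  sq_int : MemLp f 2 μ
  centered : ∫ ω, f ω ∂μ = 0
  stationary : ∀ u : ℤ × ℤ, MeasurePreserving (shift2 u) μ μ
  commuting : ∀ (a b u v : ℤ) (g : Ω2 → ℝ), Integrable g μ →
    μ[ μ[g|Ffil a b] | Ffil u v] =ᵐ[μ] μ[g|Ffil (min a u) (min b v)]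
  ergodic : Ergodic (shift2 (1, 0)) μ ∨ Ergodic (shift2 (0, 1)) μ

/-- The limiting variance `σ² = ‖∑_{u,v ≥ 0} P_{0,0}(X_{u,v})‖₂²`. -/
def sigmaSq (μ : Measure Ω2) (f : Ω2 → ℝ) : ℝ :=
  ∫ ω, (∑' uv : ℕ × ℕ, Pproj μ 0 0 (Xf f ((uv.1 : ℤ), (uv.2 : ℤ))) ω) ^ 2 ∂μ

/-- Quenched CLT for a one-parameter family `Y_n`, as `n → ∞`: for almost every `ω`,
under the regular conditional probability `P^ω = P(·|F_{0,0})(ω)`, the law of `Y_n`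
converges weakly to the normal law `N(0, σ²)`. -/
def QuenchedCLT1 (μ : Measure Ω2) [IsFiniteMeasure μ] (Y : ℕ → Ω2 → ℝ) (σ2 : ℝ) : Prop :=
  ∀ᵐ ω ∂μ, ∀ g : ℝ →ᵇ ℝ,
    Tendsto (fun n : ℕ => ∫ x, g (Y n x) ∂(condExpKernel μ (Ffil 0 0) ω))
      atTop (𝓝 (∫ x, g x ∂(gaussianReal 0 (Real.toNNReal σ2))))

/-- Quenched CLT for a two-parameter family `Y_{n,m}`, as `n ∧ m → ∞` (that is, along the
product `atTop` filter, both indices tending to infinity): for almost every `ω`, under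
`P^ω = P(·|F_{0,0})(ω)`, the law of `Y_{n,m}` converges weakly to `N(0, σ²)`. -/
def QuenchedCLT2 (μ : Measure Ω2) [IsFiniteMeasure μ] (Y : ℕ → ℕ → Ω2 → ℝ) (σ2 : ℝ) : Prop :=
  ∀ᵐ ω ∂μ, ∀ g : ℝ →ᵇ ℝ,
    Tendsto (fun nm : ℕ × ℕ => ∫ x, g (Y nm.1 nm.2 x) ∂(condExpKernel μ (Ffil 0 0) ω))
      atTop (𝓝 (∫ x, g x ∂(gaussianReal 0 (Real.toNNReal σ2))))

end

/-!
Since `F_{0,0} ≤ F_{1,1}`, the tower property and the contractivity of conditional expectations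
give `E|E_{0,0} X_{u,v}| ≤ ‖E_{1,1} X_{u,v}‖₂`, so the hypothesis says that
`∑ |E_{0,0} X_{u,v}| / √(uv)` has finite expectation and is therefore finite almost surely.
On the box `u ≤ n, v ≤ m` we have `uv ≤ nm`, so dominated convergence for series turns this
summability into `∑_{u ≤ n, v ≤ m} |E_{0,0} X_{u,v}| / √(nm) → 0`.
-/

lemma Ffil_mono {k l k' l' : ℤ} (hk : k ≤ k') (hl : l ≤ l') : Ffil k l ≤ Ffil k' l' :=
  iSup₂_le fun p hp => le_iSup₂_of_le p ⟨hp.1.trans hk, hp.2.trans hl⟩ le_rfl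

lemma Ffil_le (k l : ℤ) : Ffil k l ≤ (inferInstance : MeasurableSpace Ω2) :=
  iSup₂_le fun p _ => (measurable_pi_apply p).comap_le

lemma Ssum_eq_sum_range (f : Ω2 → ℝ) (n m : ℕ) :
    Ssum f n m = ∑ p ∈ Finset.range n ×ˢ Finset.range m,
      Xf f ((p.1 : ℤ) + 1, (p.2 : ℤ) + 1) := by
  have shift (k : ℕ) {M : Type} [AddCommMonoid M] (g : ℕ → M) :
      ∑ u ∈ Finset.Icc 1 k, g u = ∑ i ∈ Finset.range k, g (i + 1) := by
    rw [Finset.range_eq_Ico, Finset.sum_Ico_add']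
    rfl
  ext ω
  simp only [Ssum, shift, Finset.sum_apply, Finset.sum_product, Nat.cast_add, Nat.cast_one]

lemma condExp_Ssum_eq_sum {μ : Measure Ω2} {f : Ω2 → ℝ}
    (hX : ∀ u : ℤ × ℤ, Integrable (Xf f u) μ) (m : MeasurableSpace Ω2) :
    ∀ᵐ ω ∂μ, ∀ n k : ℕ, (μ[Ssum f n k|m]) ω =
      ∑ p ∈ Finset.range n ×ˢ Finset.range k, (μ[Xf f ((p.1 : ℤ) + 1, (p.2 : ℤ) + 1)|m]) ω := by
  refine ae_all_iff.2 fun n => ae_all_iff.2 fun k => ?_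
  filter_upwards [condExp_finsetSum (fun p _ => hX _) m] with ω hω
  rw [Ssum_eq_sum_range, hω, Finset.sum_apply]

section

variable {α : Type*} {m₀ : MeasurableSpace α} {μ : Measure α}

lemma eLpNorm_one_condExp_le_eLpNorm_two_condExp [IsProbabilityMeasure μ]
    {m m' : MeasurableSpace α} (hm : m ≤ m') (hm' : m' ≤ m₀) (g : α → ℝ) :
    eLpNorm (μ[g|m]) 1 μ ≤ eLpNorm (μ[g|m']) 2 μ :=
  calc eLpNorm (μ[g|m]) 1 μ = eLpNorm (μ[μ[g|m']|m]) 1 μ :=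
        eLpNorm_congr_ae (condExp_condExp_of_le hm hm').symm
    _ ≤ eLpNorm (μ[g|m']) 1 μ := eLpNorm_condExp_le_eLpNorm _ le_rfl
    _ ≤ eLpNorm (μ[g|m']) 2 μ := eLpNorm_le_eLpNorm_of_exponent_le one_le_two
        (stronglyMeasurable_condExp.mono hm').aestronglyMeasurable

lemma ae_summable_abs_div_of_tsum_eLpNorm_div_ne_top {ι : Type*} [Countable ι]
    {g : ι → α → ℝ} (hg : ∀ i, AEMeasurable (g i) μ) (w : ι → ℝ≥0∞)
    (h : ∑' i, eLpNorm (g i) 1 μ / w i ≠ ∞) :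
    ∀ᵐ ω ∂μ, Summable fun i => |g i ω| / (w i).toReal := by
  have hmeas (i : ι) : AEMeasurable (fun ω => ‖g i ω‖ₑ / w i) μ :=
    (hg i).enorm.div_const _
  have hint : ∫⁻ ω, ∑' i, ‖g i ω‖ₑ / w i ∂μ ≠ ∞ := by
    rw [lintegral_tsum hmeas]
    refine ne_of_eq_of_ne (tsum_congr fun i => ?_) h
    simp only [div_eq_mul_inv]
    rw [lintegral_mul_const'' _ (hg i).enorm, eLpNorm_one_eq_lintegral_enorm]
  filter_upwards [ae_lt_top' (AEMeasurable.tsum hmeas) hint] with ω hω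
  refine (ENNReal.summable_toReal hω.ne).congr fun i => ?_
  rw [ENNReal.toReal_div, toReal_enorm, Real.norm_eq_abs]

end

lemma tendsto_sum_range_prod_div_sqrt_of_summable {a : ℕ × ℕ → ℝ}
    (ha : Summable fun p => |a p| / Real.sqrt ((p.1 + 1) * (p.2 + 1))) :
    Tendsto (fun nm : ℕ × ℕ =>
        (∑ p ∈ Finset.range nm.1 ×ˢ Finset.range nm.2, |a p|) / Real.sqrt (nm.1 * nm.2))
      atTop (𝓝 0) := by
  have hsqrt : Tendsto (fun nm : ℕ × ℕ => Real.sqrt (nm.1 * nm.2)) atTop atTop := by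
    rw [← prod_atTop_atTop_eq]
    exact Real.tendsto_sqrt_atTop.comp
      ((tendsto_natCast_atTop_atTop.comp tendsto_fst).atTop_mul_atTop₀
        (tendsto_natCast_atTop_atTop.comp tendsto_snd))
  have hbox {n m : ℕ} {p : ℕ × ℕ} (hp : p ∈ Finset.range n ×ˢ Finset.range m) :
      |a p| / Real.sqrt (n * m) ≤ |a p| / Real.sqrt ((p.1 + 1) * (p.2 + 1)) := by
    simp only [Finset.mem_product, Finset.mem_range] at hp
    have h1 : (p.1 : ℝ) + 1 ≤ n := by exact_mod_cast hp.1
    have h2 : (p.2 : ℝ) + 1 ≤ m := by exact_mod_cast hp.2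
    gcongr
  set box : ℕ × ℕ → Finset (ℕ × ℕ) := fun nm => Finset.range nm.1 ×ˢ Finset.range nm.2
  set F : ℕ × ℕ → ℕ × ℕ → ℝ := fun nm => (box nm : Set (ℕ × ℕ)).indicator
    fun p => |a p| / Real.sqrt (nm.1 * nm.2)
  have hF (nm p : ℕ × ℕ) : ‖F nm p‖ ≤ |a p| / Real.sqrt (nm.1 * nm.2) :=
    (norm_indicator_le_norm_self _ _).trans_eq (Real.norm_of_nonneg (by positivity))
  have hlim : Tendsto (fun nm => ∑' p, F nm p) atTop (𝓝 (∑' _ : ℕ × ℕ, (0 : ℝ))) :=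
    tendsto_tsum_of_dominated_convergence ha
      (fun p => squeeze_zero_norm (hF · p) (tendsto_const_nhds.div_atTop hsqrt))
      (Eventually.of_forall fun nm p => by
        by_cases hp : p ∈ box nm
        · exact (hF nm p).trans (hbox hp)
        · rw [show F nm p = 0 from Set.indicator_of_notMem (Finset.mem_coe.not.2 hp) _, norm_zero]
          positivity)
  rw [tsum_zero] at hlim
  refine hlim.congr fun nm => ?_
  rw [Finset.sum_div, sum_eq_tsum_indicator]

lemma toReal_rpow_half_natCast_succ_mul (a b : ℕ) :
    ((((a : ℝ≥0∞) + 1) * ((b : ℝ≥0∞) + 1)) ^ (1 / 2 : ℝ)).toReal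
      = Real.sqrt ((a + 1) * (b + 1)) := by
  rw [← ENNReal.toReal_rpow, Real.sqrt_eq_rpow]
  norm_cast

theorem conditional_mean_negligible_general
    (μ : Measure Ω2) [IsProbabilityMeasure μ] (f : Ω2 → ℝ)
    (hL2 : MemLp f 2 μ)
    (hstat : ∀ u : ℤ × ℤ, MeasurePreserving (shift2 u) μ μ)
    (h2 : ∑' uv : ℕ × ℕ,
        eLpNorm (μ[Xf f ((uv.1 : ℤ) + 1, (uv.2 : ℤ) + 1)|Ffil 1 1]) 2 μ
          / (((uv.1 : ℝ≥0∞) + 1) * ((uv.2 : ℝ≥0∞) + 1)) ^ (1 / 2 : ℝ) ≠ ∞) :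
    (∀ᵐ ω ∂μ, Tendsto (fun nm : ℕ × ℕ =>
        |(μ[Ssum f nm.1 nm.2|Ffil 0 0]) ω| / Real.sqrt (nm.1 * nm.2))
      atTop (𝓝 0)) ∧
    (∀ᵐ ω ∂μ, Summable (fun uv : ℕ × ℕ =>
        |(μ[Xf f ((uv.1 : ℤ) + 1, (uv.2 : ℤ) + 1)|Ffil 0 0]) ω|
          / Real.sqrt ((uv.1 + 1) * (uv.2 + 1)))) := by
  have hX (u : ℤ × ℤ) : Integrable (Xf f u) μ :=
    (hL2.comp_measurePreserving (hstat u)).integrable one_le_two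
  have hsum : ∀ᵐ ω ∂μ, Summable (fun uv : ℕ × ℕ =>
      |(μ[Xf f ((uv.1 : ℤ) + 1, (uv.2 : ℤ) + 1)|Ffil 0 0]) ω|
        / Real.sqrt ((uv.1 + 1) * (uv.2 + 1))) := by
    have h1 := ae_summable_abs_div_of_tsum_eLpNorm_div_ne_top
      (fun _ => (stronglyMeasurable_condExp.mono (Ffil_le 0 0)).measurable.aemeasurable) _
      (ne_top_of_le_ne_top h2 (ENNReal.tsum_le_tsum fun _ => ENNReal.div_le_div_right
        (eLpNorm_one_condExp_le_eLpNorm_two_condExp (Ffil_mono zero_le_one zero_le_one)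
          (Ffil_le 1 1) _) _))
    simpa only [toReal_rpow_half_natCast_succ_mul] using h1
  refine ⟨?_, hsum⟩
  filter_upwards [condExp_Ssum_eq_sum hX (Ffil 0 0), hsum] with ω hS hω
  refine squeeze_zero' (Eventually.of_forall fun _ => by positivity)
    (Eventually.of_forall fun nm => ?_) (tendsto_sum_range_prod_div_sqrt_of_summable hω)
  rw [hS]
  gcongr
  exact Finset.abs_sum_le_sum_abs _ _

/-- If `∑_{u,v≥1} ‖E_{1,1}(X_{u,v})‖₂/(uv)^{1/2} < ∞`, then
`|E_{0,0}(S_{n,m})|/√(nm) → 0` almost surely as `n ∧ m → ∞`; in particular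
`∑_{u,v≥1} |E_{0,0}(X_{u,v})|/√(uv) < ∞` almost surely. (Stationary setting with
commuting filtrations, `X_{0,0} ∈ L²` centered; no ergodicity is needed.) -/
theorem conditional_mean_negligible
    (μ : Measure Ω2) [IsProbabilityMeasure μ] (f : Ω2 → ℝ)
    (hf : Measurable[Ffil 0 0] f)
    (hL2 : MemLp f 2 μ)
    (hmean : ∫ ω, f ω ∂μ = 0)
    (hstat : ∀ u : ℤ × ℤ, MeasurePreserving (shift2 u) μ μ)
    (hcomm : ∀ (a b u v : ℤ) (g : Ω2 → ℝ), Integrable g μ →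
      μ[ μ[g|Ffil a b] | Ffil u v] =ᵐ[μ] μ[g|Ffil (min a u) (min b v)])
    (h2 : ∑' uv : ℕ × ℕ,
        eLpNorm (μ[Xf f ((uv.1 : ℤ) + 1, (uv.2 : ℤ) + 1)|Ffil 1 1]) 2 μ
          / (((uv.1 : ℝ≥0∞) + 1) * ((uv.2 : ℝ≥0∞) + 1)) ^ (1 / 2 : ℝ) ≠ ∞) :
    (∀ᵐ ω ∂μ, Tendsto (fun nm : ℕ × ℕ =>
        |(μ[Ssum f nm.1 nm.2|Ffil 0 0]) ω| / Real.sqrt (nm.1 * nm.2))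
      atTop (𝓝 0)) ∧
    (∀ᵐ ω ∂μ, Summable (fun uv : ℕ × ℕ =>
        |(μ[Xf f ((uv.1 : ℤ) + 1, (uv.2 : ℤ) + 1)|Ffil 0 0]) ω|
          / Real.sqrt ((uv.1 + 1) * (uv.2 + 1)))) :=
  conditional_mean_negligible_general μ f hL2 hstat h2
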